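/- Define H̃0(ξ, η) = (1 − G1²/L1²)·(2 − 5·(1 − Γ²/G1²)·(η²/(ξ² + η²))) − Γ²/L1² with G1 = L1 − (ξ² + η²)/2, for 0 < ξ² + η² < L1, and H̃0(0, 0) = −Γ²/L1². Then, as (ξ, η) → (0, 0), H̃0(ξ, η) = −Γ²/L1² + (1/L1)·(2·ξ² − (3 − 5·Γ²/L1²)·η²) + O((ξ² + η²)²). In particular the origin is a hyperbolic critical point of H̃0 when 0 < Γ < L1·√(3/5). -/

import Mathlib

open Asymptotics Filter

/-- The first-order quadrupolar Hamiltonian written in the symplectic Poincaré variables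
`ξ = √(2(L1 − G1))·cos g1`, `η = −√(2(L1 − G1))·sin g1`, i.e. with
`G1 = L1 − (ξ² + η²)/2` and `sin² g1 = η²/(ξ² + η²)`.  (With Lean's convention
`0/0 = 0`, this formula also gives the correct value `−Γ²/L1²` at the origin.) -/
noncomputable def Htilde (L1 Γ ξ η : ℝ) : ℝ :=
  (1 - (L1 - (ξ ^ 2 + η ^ 2) / 2) ^ 2 / L1 ^ 2) *
      (2 - 5 * (1 - Γ ^ 2 / (L1 - (ξ ^ 2 + η ^ 2) / 2) ^ 2) * (η ^ 2 / (ξ ^ 2 + η ^ 2)))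
    - Γ ^ 2 / L1 ^ 2

set_option maxHeartbeats 1000000 in
theorem poincare_expansion_at_origin (L1 Γ : ℝ) (hL1 : 0 < L1) (hΓpos : 0 < Γ)
    (hΓ : Γ < L1 * Real.sqrt (3 / 5)) :
    Htilde L1 Γ 0 0 = -Γ ^ 2 / L1 ^ 2 ∧
    (fun p : ℝ × ℝ => Htilde L1 Γ p.1 p.2 -
        (-Γ ^ 2 / L1 ^ 2 + (1 / L1) * (2 * p.1 ^ 2 - (3 - 5 * Γ ^ 2 / L1 ^ 2) * p.2 ^ 2)))
      =O[nhds (0 : ℝ × ℝ)] (fun p : ℝ × ℝ => (p.1 ^ 2 + p.2 ^ 2) ^ 2) ∧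
    0 < 3 - 5 * Γ ^ 2 / L1 ^ 2 := by
  have hL1' := hL1.ne'
  have hval : Htilde L1 Γ 0 0 = -Γ ^ 2 / L1 ^ 2 := by simp [Htilde]; field_simp; ring
  have hΓsq : Γ ^ 2 < 3 / 5 * L1 ^ 2 := by
    have h1 : Γ * Γ < (L1 * Real.sqrt (3/5)) * (L1 * Real.sqrt (3/5)) :=
      mul_self_lt_mul_self hΓpos.le hΓ
    have h2 : Real.sqrt (3/5) * Real.sqrt (3/5) = 3/5 :=
      Real.mul_self_sqrt (by norm_num)
    nlinarith
  refine ⟨hval, ?_, by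
    have hL2 : (0:ℝ) < L1 ^ 2 := by positivity
    rw [sub_pos, div_lt_iff₀ hL2]; nlinarith⟩
  rw [isBigO_iff]
  refine ⟨(7*L1^3 + 15*Γ^2*L1) / L1^5, ?_⟩
  have hcont : Continuous fun p : ℝ × ℝ => p.1 ^ 2 + p.2 ^ 2 := by continuity
  have hsmall : ∀ᶠ p : ℝ × ℝ in nhds 0, p.1 ^ 2 + p.2 ^ 2 < L1 / 2 := by
    have h0 : ((0:ℝ×ℝ).1 ^ 2 + (0:ℝ×ℝ).2 ^ 2) < L1 / 2 := by norm_num; positivity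
    exact (hcont.continuousAt).eventually_lt_const h0
  filter_upwards [hsmall] with p hp
  obtain ⟨ξ, η⟩ := p
  simp only at hp ⊢
  set K := 7*L1^3 + 15*Γ^2*L1 with hKdef
  have hK0 : 0 ≤ K := by nlinarith [pow_pos hL1 3, mul_pos (mul_pos (by norm_num : (0:ℝ)<15) (mul_pos hΓpos hΓpos)) hL1, sq_nonneg Γ]
  set r := ξ ^ 2 + η ^ 2 with hrdef
  rcases eq_or_lt_of_le (by positivity : (0:ℝ) ≤ r) with hr0 | hr
  · have hξ : ξ = 0 := by nlinarith [sq_nonneg ξ, sq_nonneg η]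
    have hη : η = 0 := by nlinarith [sq_nonneg ξ, sq_nonneg η]
    subst hξ; subst hη
    rw [hrdef, hval]
    norm_num
  · have hG : (0:ℝ) < L1 - r / 2 := by nlinarith
    set G := L1 - r/2 with hGdef
    have hid : Htilde L1 Γ ξ η -
        (-Γ ^ 2 / L1 ^ 2 + (1 / L1) * (2 * ξ ^ 2 - (3 - 5 * Γ ^ 2 / L1 ^ 2) * η ^ 2))
        = (-2*L1*G^2*r^2 + 5*η^2*r*(G^2*L1 + Γ^2*(3*L1 - r)))
          / (4*L1^3*G^2) := by
      unfold Htilde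
      rw [← hrdef, ← hGdef]
      have hGne : G ≠ 0 := hG.ne'
      field_simp [hr.ne', hL1']
      rw [hGdef, hrdef]
      ring
    have hη2 : η ^ 2 ≤ r := by nlinarith [sq_nonneg ξ]
    have hGlb : 3 * L1 / 4 ≤ G := by rw [hGdef]; nlinarith
    have hGub : G ≤ L1 := by rw [hGdef]; nlinarith
    clear_value G
    clear_value r
    rw [hid]
    clear hid hval hcont hsmall hΓ hΓsq
    set num := -2*L1*G^2*r^2 + 5*η^2*r*(G^2*L1 + Γ^2*(3*L1 - r)) with hnumdef
    have hD : (0:ℝ) < 4*L1^3*G^2 := by positivity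
    have h1 : η^2 * r ≤ r * r := mul_le_mul_of_nonneg_right hη2 hr.le
    have h2 : G^2 ≤ L1^2 := by nlinarith
    have h3 : 9*L1^2/16 ≤ G^2 := by nlinarith
    have hF0 : 0 ≤ G^2*L1 + Γ^2*(3*L1 - r) := by nlinarith [sq_nonneg G, sq_nonneg Γ]
    have hFub : G^2*L1 + Γ^2*(3*L1 - r) ≤ L1^3 + 3*Γ^2*L1 := by
      nlinarith [mul_le_mul_of_nonneg_right h2 hL1.le, mul_nonneg (sq_nonneg Γ) hr.le]
    have hub : num ≤ K * r^2 := by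
      nlinarith [mul_le_mul h1 hFub hF0 (mul_nonneg hr.le hr.le),
        mul_nonneg (mul_nonneg hL1.le (sq_nonneg G)) (sq_nonneg r),
        mul_nonneg (pow_nonneg hL1.le 3) (sq_nonneg r)]
    have hlb : -(K * r^2) ≤ num := by
      nlinarith [mul_nonneg (mul_nonneg (mul_nonneg (by norm_num : (0:ℝ) ≤ 5) (sq_nonneg η)) hr.le) hF0,
        mul_le_mul_of_nonneg_left (mul_le_mul_of_nonneg_right h2 (sq_nonneg r)) hL1.le,
        mul_nonneg (mul_nonneg (sq_nonneg Γ) hL1.le) (sq_nonneg r),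
        mul_nonneg (pow_nonneg hL1.le 3) (sq_nonneg r)]
    have habs : |num| ≤ K * r^2 := abs_le.mpr ⟨hlb, hub⟩
    have hdiff : 0 ≤ 4*L1^3*G^2 - L1^5 := by
      nlinarith [mul_nonneg (pow_nonneg hL1.le 3) (by nlinarith : (0:ℝ) ≤ G^2 - 9*L1^2/16)]
    have hstep : K * r^2 ≤ K / L1^5 * r^2 * (4*L1^3*G^2) := by
      rw [div_mul_eq_mul_div, div_mul_eq_mul_div, le_div_iff₀ (by positivity : (0:ℝ) < L1^5)]
      nlinarith [mul_nonneg (mul_nonneg hK0 (sq_nonneg r)) hdiff]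
    calc ‖num / (4*L1^3*G^2)‖ = |num| / (4*L1^3*G^2) := by
          rw [Real.norm_eq_abs, abs_div, abs_of_nonneg hD.le]
      _ ≤ K * r^2 / (4*L1^3*G^2) := by
          gcongr
      _ ≤ K / L1^5 * r^2 := by
          rw [div_le_iff₀ hD]; exact hstep
      _ ≤ K / L1^5 * ‖r^2‖ := by
          rw [Real.norm_eq_abs, abs_of_nonneg (sq_nonneg r)]
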